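/- Given real numbers a₁ ≥ a₂ ≥ … ≥ aₙ > 0 and nonnegative variables x₁,…,xₙ with ∑ᵢ xᵢ = t₁ and ∑ᵢ aᵢ²xᵢ = t₂, the minimum of ∑ᵢ aᵢxᵢ over all such feasible (x₁,…,xₙ) equals (t₂ + a₁aₙt₁)/(a₁ + aₙ). -/
import Mathlib

lemma sum_mul_two_point {m : ℕ} (g : Fin m → ℝ) (j k : Fin m) (hjk : j ≠ k) (c d : ℝ) :
    ∑ i, g i * (if i = j then c else if i = k then d else 0) = g j * c + g k * d := by
  have h : ∀ i, g i * (if i = j then c else if i = k then d else 0)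
      = (if i = j then g i * c else 0) + (if i = k then g i * d else 0) := by
    intro i
    by_cases h1 : i = j <;> by_cases h2 : i = k
    · exact absurd (h1 ▸ h2) hjk
    all_goals simp [h1, h2, hjk, Ne.symm hjk]
  rw [Finset.sum_congr rfl fun i _ => h i, Finset.sum_add_distrib]
  simp

/-- Given reals `a 0 ≥ a 1 ≥ … ≥ a n` with `a n > 0`, and assuming the
constraints `∑ x i = t₁`, `∑ (a i)² * x i = t₂`, `x i ≥ 0` are feasible, the minimum of
`∑ a i * x i` over all feasible `x` equals `(t₂ + a 0 * a n * t₁) / (a 0 + a n)`. -/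
theorem stmt1 (n : ℕ) (a : Fin (n + 1) → ℝ) (ha : Antitone a) (hpos : 0 < a (Fin.last n))
    (t₁ t₂ : ℝ)
    (hfeas : ∃ x : Fin (n + 1) → ℝ, (∀ i, 0 ≤ x i) ∧ (∑ i, x i) = t₁ ∧
      (∑ i, (a i) ^ 2 * x i) = t₂) :
    IsLeast {s : ℝ | ∃ x : Fin (n + 1) → ℝ, (∀ i, 0 ≤ x i) ∧ (∑ i, x i) = t₁ ∧
        (∑ i, (a i) ^ 2 * x i) = t₂ ∧ s = ∑ i, a i * x i}
      ((t₂ + a 0 * a (Fin.last n) * t₁) / (a 0 + a (Fin.last n))) := by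
  set A := a 0 with hA
  set B := a (Fin.last n) with hB
  have hBpos : 0 < B := hpos
  have hBA : B ≤ A := ha (Fin.zero_le _)
  have hApos : 0 < A := lt_of_lt_of_le hBpos hBA
  have hABpos : 0 < A + B := by linarith
  have hle : ∀ i, B ≤ a i := fun i => ha (Fin.le_last i)
  have hge : ∀ i, a i ≤ A := fun i => ha (Fin.zero_le i)
  obtain ⟨y, hy0, hy1, hy2⟩ := hfeas
  -- bounds on t₂
  have ht1 : 0 ≤ t₁ := hy1 ▸ Finset.sum_nonneg fun i _ => hy0 i
  have ht2u : t₂ ≤ A ^ 2 * t₁ := by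
    rw [← hy1, ← hy2, Finset.mul_sum]
    refine Finset.sum_le_sum fun i _ => ?_
    nlinarith [hy0 i, mul_nonneg (hy0 i) (mul_nonneg (sub_nonneg.2 (hge i)) (by nlinarith [hle i, hge i] : (0:ℝ) ≤ A + a i))]
  have ht2l : B ^ 2 * t₁ ≤ t₂ := by
    rw [← hy1, ← hy2, Finset.mul_sum]
    refine Finset.sum_le_sum fun i _ => ?_
    nlinarith [hy0 i, mul_nonneg (hy0 i) (mul_nonneg (sub_nonneg.2 (hle i)) (by nlinarith [hle i, hge i] : (0:ℝ) ≤ a i + B))]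
  constructor
  · -- membership: minimum is achieved
    by_cases hAB : A = B
    · -- all a i equal; the given feasible point achieves the value
      refine ⟨y, hy0, hy1, hy2, ?_⟩
      have heq : ∀ i, a i = A := fun i => le_antisymm (hge i) (hAB ▸ hle i)
      have h2 : t₂ = A ^ 2 * t₁ := by
        rw [← hy2, ← hy1, Finset.mul_sum]
        exact Finset.sum_congr rfl fun i _ => by rw [heq i]
      have hs : ∑ i, a i * y i = A * t₁ := by
        rw [← hy1, Finset.mul_sum]
        exact Finset.sum_congr rfl fun i _ => by rw [heq i]
      rw [hs, h2, ← hAB]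
      field_simp
    · have hlt : B < A := lt_of_le_of_ne hBA (Ne.symm hAB)
      have h0l : (0 : Fin (n + 1)) ≠ Fin.last n := by
        intro h; exact hAB (by rw [hA, hB, h])
      have hD : (0:ℝ) < A ^ 2 - B ^ 2 := by nlinarith
      set x0 := (t₂ - B ^ 2 * t₁) / (A ^ 2 - B ^ 2) with hx0
      set xl := (A ^ 2 * t₁ - t₂) / (A ^ 2 - B ^ 2) with hxl
      have hx0n : 0 ≤ x0 := div_nonneg (by linarith) hD.le
      have hxln : 0 ≤ xl := div_nonneg (by linarith) hD.le
      refine ⟨fun i => if i = 0 then x0 else if i = Fin.last n then xl else 0, ?_, ?_, ?_, ?_⟩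
      · intro i
        dsimp only
        split_ifs <;> simp [hx0n, hxln]
      · have := sum_mul_two_point (fun _ : Fin (n+1) => (1:ℝ)) 0 (Fin.last n) h0l x0 xl
        simp only [one_mul] at this
        rw [this, hx0, hxl]; field_simp; ring
      · have := sum_mul_two_point (fun j : Fin (n+1) => a j ^ 2) 0 (Fin.last n) h0l x0 xl
        rw [this]
        simp only [← hA, ← hB]
        rw [hx0, hxl]; field_simp; ring
      · have := sum_mul_two_point (fun j : Fin (n+1) => a j) 0 (Fin.last n) h0l x0 xl
        rw [this]
        simp only [← hA, ← hB]
        rw [hx0, hxl, div_eq_iff (ne_of_gt hABpos)]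
        field_simp; ring
  · -- lower bound
    rintro s ⟨x, hx0, hx1, hx2, rfl⟩
    rw [div_le_iff₀ hABpos]
    have key : t₂ + A * B * t₁ ≤ ∑ i, a i * x i * (A + B) := by
      rw [← hx1, ← hx2, Finset.mul_sum, ← Finset.sum_add_distrib]
      refine Finset.sum_le_sum fun i _ => ?_
      nlinarith [mul_nonneg (mul_nonneg (sub_nonneg.2 (hge i)) (sub_nonneg.2 (hle i))) (hx0 i)]
    calc t₂ + A * B * t₁ ≤ ∑ i, a i * x i * (A + B) := key
      _ = (∑ i, a i * x i) * (A + B) := by rw [Finset.sum_mul]
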